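/- Assume λ + μ² ≠ 0. Let P, Q, R, S : ℂ → ℂ be entire functions (not necessarily solving the pqrs-system) satisfying the A-relations: for every w ∈ ℂ, P(iπ−w) = −e^{iℓπ}·e^{2(1−ℓ)w}·P(w); Q(iπ−w) = e^{iℓπ}·e^{−2ℓw}·(μ·P(w) + e^{2w}·R(w)); R(iπ−w) = e^{iℓπ}·e^{2(1−ℓ)w}·(μ·e^{2w}·P(w) + Q(w)); S(iπ−w) = −e^{iℓπ}·e^{−2ℓw}·(μ·(μ·e^{2w}·P(w) + Q(w)) + e^{2w}·(μ·e^{2w}·R(w) + S(w))). Then the first integral is invariant under the A-transformation: for every w ∈ ℂ, 𝔇(iπ−w) = 𝔇(w), where 𝔇(w) = e^{2(1−ℓ)w}·(P(w)·S(w) − Q(w)·R(w)). -/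
import Mathlib


noncomputable def ipi : ℂ := (Real.pi : ℂ) * Complex.I

theorem statement_5 (ell lam mu : ℂ) (hne : lam + mu ^ 2 ≠ 0) (P Q R S : ℂ → ℂ)
    (hP : Differentiable ℂ P) (hQ : Differentiable ℂ Q)
    (hR : Differentiable ℂ R) (hS : Differentiable ℂ S)
    (hA : ∀ w : ℂ,
      P (ipi - w) = -Complex.exp (Complex.I * ell * (Real.pi : ℂ)) *
        Complex.exp (2 * (1 - ell) * w) * P w ∧
      Q (ipi - w) = Complex.exp (Complex.I * ell * (Real.pi : ℂ)) *
        Complex.exp (-(2 * ell) * w) * (mu * P w + Complex.exp (2 * w) * R w) ∧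
      R (ipi - w) = Complex.exp (Complex.I * ell * (Real.pi : ℂ)) *
        Complex.exp (2 * (1 - ell) * w) * (mu * Complex.exp (2 * w) * P w + Q w) ∧
      S (ipi - w) = -Complex.exp (Complex.I * ell * (Real.pi : ℂ)) *
        Complex.exp (-(2 * ell) * w) *
        (mu * (mu * Complex.exp (2 * w) * P w + Q w) +
          Complex.exp (2 * w) * (mu * Complex.exp (2 * w) * R w + S w))) :
    ∀ w : ℂ,
      Complex.exp (2 * (1 - ell) * (ipi - w)) * (P (ipi - w) * S (ipi - w) - Q (ipi - w) * R (ipi - w)) =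
      Complex.exp (2 * (1 - ell) * (w)) * (P (w) * S (w) - Q (w) * R (w)) := by
  intro w
  obtain ⟨h1, h2, h3, h4⟩ := hA w
  rw [h1, h2, h3, h4]
  have hEA : Complex.exp (2 * (1 - ell) * (ipi - w)) *
      Complex.exp (Complex.I * ell * (Real.pi : ℂ)) *
      Complex.exp (Complex.I * ell * (Real.pi : ℂ)) *
      Complex.exp (2 * (1 - ell) * w) * Complex.exp (-(2 * ell) * w) *
      Complex.exp (2 * w) = Complex.exp (2 * (1 - ell) * w) := by
    simp only [← Complex.exp_add]
    have h : 2 * (1 - ell) * (ipi - w) + Complex.I * ell * (Real.pi : ℂ) +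
        Complex.I * ell * (Real.pi : ℂ) + 2 * (1 - ell) * w + -(2 * ell) * w + 2 * w
        = 2 * (Real.pi : ℂ) * Complex.I + 2 * (1 - ell) * w := by
      unfold ipi; ring
    rw [h, Complex.exp_add, Complex.exp_two_pi_mul_I, one_mul]
  linear_combination (P w * S w - Q w * R w) * hEA
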